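/- arXiv:2108.08177 — 3 statements merged into one kernel-verified Lean document; each statement's English description precedes it below -/
import Mathlib

section
/- For every integer n ≥ 3, letting α_n = ⌈2^n/24⌉, one has θ(n, α_n) − 2α_n = 2^{n−3} and θ(n, 2^{n−1} − α_n) = 5·2^{n−3}. -/
open Finset

/-- Two vertices of the hypercube `Q_n` are adjacent iff they differ in exactly one
coordinate. -/
def cubeEdge {n : ℕ} (u v : Fin n → Bool) : Prop :=
  (Finset.univ.filter (fun i => u i ≠ v i)).card = 1

instance {n : ℕ} (u v : Fin n → Bool) : Decidable (cubeEdge u v) := by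
  unfold cubeEdge; infer_instance

/-- `θ(n,S)`: the number of edges of `Q_n` with exactly one endpoint in `S`. -/
def edgeBoundary (n : ℕ) (S : Finset (Fin n → Bool)) : ℕ :=
  (Finset.univ.filter (fun p : (Fin n → Bool) × (Fin n → Bool) =>
    p.1 ∈ S ∧ p.2 ∉ S ∧ cubeEdge p.1 p.2)).card

/-- `θ(n,k) = min {θ(n,S) : S ⊆ V(Q_n), |S| = k}`. -/
noncomputable def thetaMin (n k : ℕ) : ℕ :=
  sInf {m | ∃ S : Finset (Fin n → Bool), S.card = k ∧ edgeBoundary n S = m}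

/-- The half plane `{x : x_i = a}` of `Q_n`. -/
def halfPlane (n : ℕ) (i : Fin n) (a : Bool) : Finset (Fin n → Bool) :=
  Finset.univ.filter (fun x => x i = a)

/-- `Type(S) = min_H |S ∩ H|`, minimum over the `2n` half planes of `Q_n`. -/
noncomputable def typeOf (n : ℕ) (S : Finset (Fin n → Bool)) : ℕ :=
  sInf {m | ∃ (i : Fin n) (a : Bool), (S ∩ halfPlane n i a).card = m}

/-- `θ(n,k,t) = min {θ(n,S) : |S| = k, Type(S) = t}`. -/
noncomputable def thetaMinType (n k t : ℕ) : ℕ :=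
  sInf {m | ∃ S : Finset (Fin n → Bool),
    S.card = k ∧ typeOf n S = t ∧ edgeBoundary n S = m}

/-- Graph distance on the cycle `C_m` with vertices labelled by naturals. -/
def cycleDist (m a b : ℕ) : ℕ := min (Nat.dist a b) (m - Nat.dist a b)

/-- The wirelength of an embedding `η` of `Q_n` into the cycle `C_{2^n}`:
the sum of cycle distances over all (unordered) edges of `Q_n`.  (The sum over
ordered pairs counts every edge twice, whence the division by `2`.) -/
def wirelength (n : ℕ) (η : (Fin n → Bool) → ℕ) : ℕ :=
  ((Finset.univ.filter (fun p : (Fin n → Bool) × (Fin n → Bool) =>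
    cubeEdge p.1 p.2)).sum (fun p => cycleDist (2^n) (η p.1) (η p.2))) / 2

/-- The reflected Gray code embedding `ξ_n(x) = (y)_2 + 1`, where
`y_i = (x_1 + ⋯ + x_i) mod 2`. -/
def xi (n : ℕ) (x : Fin n → Bool) : ℕ :=
  (Finset.univ.sum (fun i : Fin n =>
    ((Finset.univ.filter (fun j : Fin n => j ≤ i ∧ x j = true)).card % 2)
      * 2 ^ (n - 1 - (i : ℕ)))) + 1

/-- `f(x) = 3/4 − (64/7)(x − 1/2)²`. -/
noncomputable def fGuu (x : ℝ) : ℝ := 3/4 - 64/7 * (x - 1/2)^2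

/-- `takDelta i` is `Δ_{i+1}`: `Δ_1(x) = 1/2 − |x − 1/2|`,
`Δ_{n}(x) = (1/2)Δ_{n−1}(2x − ⌊2x⌋)`. -/
noncomputable def takDelta : ℕ → ℝ → ℝ
  | 0, x => 1/2 - |x - 1/2|
  | n+1, x => takDelta n (2*x - (⌊2*x⌋ : ℝ)) / 2

/-- `m_n(x) = Σ_{i=1}^n Δ_i(x)`, the n-th partial sum of the Takagi function. -/
noncomputable def mTakagi (n : ℕ) (x : ℝ) : ℝ := ∑ i ∈ Finset.range n, takDelta i x

/-- `y_N = ⌈2^N/24⌉ / 2^N`. -/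
noncomputable def yGuu (N : ℕ) : ℝ := (⌈(2^N : ℝ)/24⌉ : ℝ) / 2^N

/-- `p_N = 1/2 − y_N`. -/
noncomputable def pGuu (N : ℕ) : ℝ := 1/2 - yGuu N

/-- `g_{n,i,a}^{-1}(S)`, where `g_{n,i,a}` inserts the letter `a` at position `i`. -/
def gPre (n : ℕ) (i : Fin (n+1)) (a : Bool) (S : Finset (Fin (n+1) → Bool)) :
    Finset (Fin n → Bool) :=
  Finset.univ.filter (fun x => i.insertNth a x ∈ S)

def consE (n : ℕ) : Bool × (Fin n → Bool) ≃ (Fin (n+1) → Bool) where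
  toFun p := Fin.cons p.1 p.2
  invFun u := (u 0, Fin.tail u)
  left_inv p := by simp
  right_inv u := by simp [Fin.cons_self_tail]

lemma sum_consE {n : ℕ} {M : Type*} [AddCommMonoid M] (g : (Fin (n+1) → Bool) → M) :
    ∑ u, g u = ∑ b : Bool, ∑ x : Fin n → Bool, g (Fin.cons b x) := by
  exact ((Fintype.sum_equiv (consE n) (fun p => g (Fin.cons p.1 p.2)) g (fun p => rfl)).symm).trans
    (Fintype.sum_prod_type (fun p : Bool × (Fin n → Bool) => g (Fin.cons p.1 p.2)))

lemma cubeEdge_cons {n : ℕ} (b c : Bool) (x y : Fin n → Bool) :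
    cubeEdge (Fin.cons b x) (Fin.cons c y) ↔ (b = c ∧ cubeEdge x y) ∨ (¬ b = c ∧ x = y) := by
  unfold cubeEdge
  rw [card_filter, Fin.sum_univ_succ]
  simp only [ne_eq, Fin.cons_zero, Fin.cons_succ]
  by_cases hbc : b = c
  · subst hbc
    rw [if_neg (not_not_intro rfl), ← card_filter, zero_add]
    simp [cubeEdge]
  · rw [if_pos hbc, ← card_filter]
    simp only [hbc, false_and, not_false_iff, true_and, false_or]
    constructor
    · intro h
      have h0 : (univ.filter (fun i => ¬ x i = y i)).card = 0 := by omega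
      have hemp := Finset.card_eq_zero.mp h0
      funext i
      by_contra hi
      have hmem : i ∈ univ.filter (fun i => ¬ x i = y i) := by simp [hi]
      rw [hemp] at hmem
      exact absurd hmem (Finset.notMem_empty i)
    · rintro rfl
      simp

def popc : ℕ → ℕ
  | 0 => 0
  | (n+1) => popc ((n+1)/2) + (n+1) % 2
decreasing_by exact Nat.div_lt_self (Nat.succ_pos n) one_lt_two

def ww : ℕ → ℕ
  | 0 => 0
  | (n+1) => ww n + popc n

lemma ww_succ (n : ℕ) : ww (n+1) = ww n + popc n := rfl

lemma popc_two_mul (m : ℕ) : popc (2*m) = popc m := by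
  cases m with
  | zero => rfl
  | succ k =>
    show popc (2*(k+1)) = _
    rw [show 2*(k+1) = (2*k+1)+1 by ring, popc]
    have h1 : (2*k+1+1)/2 = k+1 := by omega
    have h2 : (2*k+1+1) % 2 = 0 := by omega
    rw [h1, h2]; ring

lemma popc_two_mul_add_one (m : ℕ) : popc (2*m+1) = popc m + 1 := by
  rw [popc]
  have h1 : (2*m+1)/2 = m := by omega
  have h2 : (2*m+1) % 2 = 1 := by omega
  rw [h1, h2]

lemma ww_two_mul (m : ℕ) : ww (2*m) = 2 * ww m + m := by
  induction m with
  | zero => rfl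
  | succ k ih =>
    rw [show 2*(k+1) = (2*k+1)+1 by ring, ww_succ, show 2*k+1 = 2*k+1 from rfl,
      ww_succ, ih, popc_two_mul, popc_two_mul_add_one, ww_succ]
    ring

lemma ww_odd (m : ℕ) : ww (2*m+1) = ww m + ww (m+1) + m := by
  rw [ww_succ, ww_two_mul, popc_two_mul, ww_succ]; ring

lemma ww_halves (k : ℕ) : ww k = ww ((k+1)/2) + ww (k/2) + k/2 := by
  rcases Nat.even_or_odd k with ⟨m, rfl⟩ | ⟨m, rfl⟩
  · have h1 : (m+m+1)/2 = m := by omega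
    have h2 : (m+m)/2 = m := by omega
    rw [h1, h2, show m+m = 2*m by ring, ww_two_mul]; ring
  · have h1 : (2*m+1+1)/2 = m+1 := by omega
    have h2 : (2*m+1)/2 = m := by omega
    rw [h1, h2, ww_odd]; ring

lemma hart_aux : ∀ N a b, a + b ≤ N → a ≤ b → ww a + ww b + a ≤ ww (a + b) := by
  intro N
  induction N with
  | zero =>
    intro a b h _
    have ha : a = 0 := by omega
    have hb : b = 0 := by omega
    subst ha; subst hb; simp [ww]
  | succ N ih =>
    intro a b hab hle
    rcases Nat.eq_zero_or_pos a with rfl | hapos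
    · simp [ww]
    rcases eq_or_lt_of_le hle with rfl | hlt
    · rw [show a + a = 2*a by ring, ww_two_mul]; omega
    rcases Nat.even_or_odd a with ⟨x, rfl⟩ | ⟨x, rfl⟩ <;>
      rcases Nat.even_or_odd b with ⟨y, rfl⟩ | ⟨y, rfl⟩
    · -- even even
      have ih1 := ih x y (by omega) (by omega)
      rw [show x+x+(y+y) = 2*(x+y) by ring, ww_two_mul,
        show x+x = 2*x by ring, ww_two_mul, show y+y = 2*y by ring, ww_two_mul]
      omega
    · -- a even, b odd
      have ih1 := ih x y (by omega) (by omega)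
      have ih2 := ih x (y+1) (by omega) (by omega)
      rw [show x+x+(2*y+1) = 2*(x+y)+1 by ring, ww_odd,
        show x+x = 2*x by ring, ww_two_mul, ww_odd,
        show x+y+1 = x+(y+1) by ring]
      omega
    · -- a odd, b even : a=2x+1 < b=y+y, so x+1 ≤ y
      have hxy : x + 1 ≤ y := by omega
      have ih1 := ih (x+1) y (by omega) (by omega)
      have ih2 := ih x y (by omega) (by omega)
      have hp : ww (y+1) = ww y + popc y := ww_succ y
      rw [show 2*x+1+(y+y) = 2*(x+y)+1 by ring, ww_odd, ww_odd,
        show y+y = 2*y by ring, ww_two_mul, show x+y+1 = x+(y+1) by ring]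
      ring_nf at ih1 ih2 hp ⊢
      omega
    · -- both odd, x < y
      have hxy : x + 1 ≤ y := by omega
      have ih1 := ih x (y+1) (by omega) (by omega)
      have ih2 := ih (x+1) y (by omega) (by omega)
      rw [show 2*x+1+(2*y+1) = 2*(x+y+1) by ring, ww_two_mul, ww_odd, ww_odd]
      ring_nf at ih1 ih2 ⊢
      omega

lemma hart (a b : ℕ) : ww a + ww b + min a b ≤ ww (a + b) := by
  rcases le_total a b with h | h
  · rw [min_eq_left h]; exact hart_aux (a+b) a b le_rfl h
  · rw [min_eq_right h, add_comm a b]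
    have := hart_aux (b+a) b a le_rfl h
    omega

lemma compl_ww : ∀ t m, m ≤ 2^t → 2 * ww (2^t - m) + 2*t*m = t * 2^t + 2 * ww m := by
  intro t
  induction t with
  | zero =>
    intro m hm
    interval_cases m <;> norm_num [ww, popc]
  | succ t ih =>
    intro m hm
    rw [pow_succ] at hm
    rcases Nat.even_or_odd m with ⟨x, rfl⟩ | ⟨x, rfl⟩
    · have hx : x ≤ 2^t := by omega
      obtain ⟨K, hK⟩ : ∃ K, K + x = 2^t := ⟨2^t - x, by omega⟩
      have ih1 := ih x hx
      rw [show (2:ℕ)^t - x = K by omega] at ih1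
      have e1 : 2^(t+1) - (x+x) = 2*K := by rw [pow_succ]; omega
      rw [e1, ww_two_mul, pow_succ, show x + x = 2*x by ring, ww_two_mul]
      zify at ih1 hK ⊢
      linear_combination (2:ℤ) * ih1 + 2 * hK
    · have hx : x + 1 ≤ 2^t := by omega
      obtain ⟨K, hK⟩ : ∃ K, K + (x+1) = 2^t := ⟨2^t - (x+1), by omega⟩
      have ih1 := ih x (by omega)
      have ih2 := ih (x+1) hx
      rw [show (2:ℕ)^t - x = K + 1 by omega] at ih1
      rw [show (2:ℕ)^t - (x+1) = K by omega] at ih2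
      have e1 : 2^(t+1) - (2*x+1) = 2*K+1 := by rw [pow_succ]; omega
      rw [e1, ww_odd, pow_succ, ww_odd]
      zify at ih1 ih2 hK ⊢
      linear_combination ih1 + ih2 + 2 * hK

def AA (m : ℕ) : ℕ := 2^m / 3 + 1

lemma two_pow_mod_three : ∀ e : ℕ, 2^e % 3 = if Even e then 1 else 2 := by
  intro e
  induction e with
  | zero => simp
  | succ e ih =>
    rw [pow_succ]
    rcases Nat.even_or_odd e with he | he
    · rw [if_pos he] at ih
      rw [if_neg (by simp [Nat.even_add_one, he])]
      omega
    · rw [if_neg (Nat.not_even_iff_odd.mpr he)] at ih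
      rw [if_pos (Nat.even_add_one.mpr (Nat.not_even_iff_odd.mpr he))]
      omega

lemma AA3 (m : ℕ) : 3 * AA m = 2^m + (if Even m then 2 else 1) := by
  have h1 := Nat.div_add_mod (2^m) 3
  have h2 := two_pow_mod_three m
  unfold AA
  rcases Nat.even_or_odd m with he | he
  · rw [if_pos he] at h2 ⊢; omega
  · rw [if_neg (Nat.not_even_iff_odd.mpr he)] at h2 ⊢; omega

lemma main_id : ∀ m : ℕ, 2 * ww (AA m) + 2^m = (m+1) * AA m ∧
    2 * popc (AA m - 1) + (if Even m then 0 else 1) = m := by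
  intro m
  induction m with
  | zero => norm_num [AA, ww, popc]
  | succ m ih =>
    obtain ⟨ih1, ih2⟩ := ih
    have h3 := AA3 m
    have h3' := AA3 (m+1)
    have hp : (2:ℕ)^(m+1) = 2 * 2^m := by rw [pow_succ]; ring
    have hA1 : 1 ≤ AA m := Nat.le_add_left 1 _
    rcases Nat.even_or_odd m with he | ho
    · -- m even : AA (m+1) = 2 * AA m - 1
      rw [if_pos he] at h3 ih2
      rw [if_neg (by simp [Nat.even_add_one, he])] at h3'
      obtain ⟨B, hB⟩ : ∃ B, AA m = B + 1 := ⟨AA m - 1, by omega⟩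
      have hrec : AA (m+1) = 2*B+1 := by omega
      constructor
      · rw [hrec, ww_odd, hp]
        rw [hB] at ih1
        have hs : ww (B+1) = ww B + popc B := ww_succ B
        rw [hB] at ih2; simp at ih2
        zify at ih1 ih2 hs ⊢
        linear_combination 2*ih1 - 2*hs - ih2
      · rw [hrec, if_neg (by simp [Nat.even_add_one, he]),
          show 2*B+1-1 = 2*B by omega, popc_two_mul]
        rw [hB] at ih2; simp at ih2
        omega
    · -- m odd : AA (m+1) = 2 * AA m
      rw [if_neg (Nat.not_even_iff_odd.mpr ho)] at h3 ih2
      rw [if_pos (Nat.even_add_one.mpr (Nat.not_even_iff_odd.mpr ho))] at h3'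
      have hrec : AA (m+1) = 2 * AA m := by omega
      constructor
      · rw [hrec, ww_two_mul, hp]
        zify at ih1 ⊢
        linear_combination 2*ih1
      · rw [hrec, if_pos (Nat.even_add_one.mpr (Nat.not_even_iff_odd.mpr ho))]
        obtain ⟨B, hB⟩ : ∃ B, AA m = B + 1 := ⟨AA m - 1, by omega⟩
        rw [hB, show 2*(B+1)-1 = 2*B+1 by omega, popc_two_mul_add_one]
        rw [hB] at ih2; simp at ih2
        omega

def half {n : ℕ} (b : Bool) (S : Finset (Fin (n+1) → Bool)) : Finset (Fin n → Bool) :=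
  univ.filter (fun x => Fin.cons b x ∈ S)

lemma mem_half {n : ℕ} {b : Bool} {S : Finset (Fin (n+1) → Bool)} (x : Fin n → Bool) :
    x ∈ half b S ↔ Fin.cons b x ∈ S := by simp [half]

lemma card_half {n : ℕ} (S : Finset (Fin (n+1) → Bool)) :
    S.card = (half false S).card + (half true S).card := by
  conv_lhs => rw [← Finset.filter_univ_mem S]
  rw [card_filter, sum_consE (fun u => if u ∈ S then 1 else 0), Fintype.sum_bool]
  unfold half
  rw [card_filter, card_filter]
  omega

def ein (n : ℕ) (S : Finset (Fin n → Bool)) : ℕ :=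
  (univ.filter (fun p : (Fin n → Bool) × (Fin n → Bool) =>
    p.1 ∈ S ∧ p.2 ∈ S ∧ cubeEdge p.1 p.2)).card

lemma ein_eq_sum (n : ℕ) (S : Finset (Fin n → Bool)) :
    ein n S = ∑ x, ∑ y, if (x ∈ S ∧ y ∈ S ∧ cubeEdge x y) then 1 else 0 := by
  unfold ein
  rw [card_filter, Fintype.sum_prod_type]

lemma deg_eq (n : ℕ) (u : Fin n → Bool) :
    ∑ v, (if cubeEdge u v then 1 else 0) = n := by
  induction n with
  | zero =>
    have h : ∀ v : Fin 0 → Bool, ¬ cubeEdge u v := by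
      intro v hc
      unfold cubeEdge at hc
      have : (univ.filter (fun i => u i ≠ v i) : Finset (Fin 0)) = ∅ := by
        apply Finset.eq_empty_iff_forall_notMem.mpr
        intro i
        exact absurd trivial (by exact fun _ => Fin.elim0 i)
      rw [this] at hc
      simp at hc
    simp [h]
  | succ n ih =>
    rw [← Fin.cons_self_tail u, sum_consE (fun v => if cubeEdge _ v then 1 else 0),
      Fintype.sum_bool]
    simp only [cubeEdge_cons]
    cases h0 : u 0
    · have t1 : (∑ x : Fin n → Bool,
          if false = true ∧ cubeEdge (Fin.tail u) x ∨ ¬false = true ∧ Fin.tail u = x then 1 else 0) = 1 := by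
        simp
      have t2 : (∑ x : Fin n → Bool,
          if false = false ∧ cubeEdge (Fin.tail u) x ∨ ¬false = false ∧ Fin.tail u = x then 1 else 0) = n := by
        simpa using ih (Fin.tail u)
      rw [t1, t2]; omega
    · have t1 : (∑ x : Fin n → Bool,
          if true = true ∧ cubeEdge (Fin.tail u) x ∨ ¬true = true ∧ Fin.tail u = x then 1 else 0) = n := by
        simpa using ih (Fin.tail u)
      have t2 : (∑ x : Fin n → Bool,
          if true = false ∧ cubeEdge (Fin.tail u) x ∨ ¬true = false ∧ Fin.tail u = x then 1 else 0) = 1 := by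
        simp
      rw [t1, t2]

lemma cubeEdge_zero (u v : Fin 0 → Bool) : ¬ cubeEdge u v := by
  intro hc
  unfold cubeEdge at hc
  have h : (univ.filter (fun i => u i ≠ v i) : Finset (Fin 0)) = ∅ := by
    apply Finset.eq_empty_iff_forall_notMem.mpr
    intro i
    exact absurd trivial (fun _ => Fin.elim0 i)
  rw [h] at hc
  simp at hc

lemma ein_zero (S : Finset (Fin 0 → Bool)) : ein 0 S = 0 := by
  unfold ein
  rw [Finset.card_eq_zero]
  apply Finset.eq_empty_iff_forall_notMem.mpr
  intro p hp
  simp only [mem_filter] at hp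
  exact cubeEdge_zero p.1 p.2 hp.2.2.2

lemma eb_add_ein (n : ℕ) (S : Finset (Fin n → Bool)) :
    edgeBoundary n S + ein n S = n * S.card := by
  unfold edgeBoundary
  rw [card_filter, Fintype.sum_prod_type, ein_eq_sum, ← Finset.sum_add_distrib]
  have step1 : ∀ x : Fin n → Bool,
      ((∑ y, if (x ∈ S ∧ y ∉ S ∧ cubeEdge x y) then 1 else 0) +
       (∑ y, if (x ∈ S ∧ y ∈ S ∧ cubeEdge x y) then 1 else 0))
      = (if x ∈ S then (n:ℕ) else 0) := by
    intro x
    rw [← Finset.sum_add_distrib]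
    by_cases hx : x ∈ S
    · rw [if_pos hx]
      refine Eq.trans ?_ (deg_eq n x)
      apply Finset.sum_congr rfl
      intro y _
      by_cases hy : y ∈ S <;> by_cases he : cubeEdge x y <;> simp [hx, hy, he]
    · rw [if_neg hx]
      apply Finset.sum_eq_zero
      intro y _
      simp [hx]
  rw [Finset.sum_congr rfl (fun x _ => step1 x), ← Finset.sum_filter,
    Finset.sum_const, Finset.filter_univ_mem, smul_eq_mul, mul_comm]

lemma inter_card_as_sum {n : ℕ} (A B : Finset (Fin n → Bool)) :
    (∑ x, if (x ∈ A ∧ x ∈ B) then 1 else 0) = (A ∩ B).card := by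
  have h : A ∩ B = univ.filter (fun x => x ∈ A ∧ x ∈ B) := by
    ext z; simp
  rw [h, card_filter]

lemma ein_decomp (n : ℕ) (S : Finset (Fin (n+1) → Bool)) :
    ein (n+1) S = ein n (half false S) + ein n (half true S)
      + 2 * ((half false S) ∩ (half true S)).card := by
  rw [ein_eq_sum]
  simp only [sum_consE, Fintype.sum_bool, cubeEdge_cons, ← mem_half]
  rw [Finset.sum_add_distrib, Finset.sum_add_distrib]
  have htt : (∑ x : Fin n → Bool, ∑ y : Fin n → Bool,
      if x ∈ half true S ∧ y ∈ half true S ∧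
        ((True ∧ cubeEdge x y) ∨ (¬True ∧ x = y)) then 1 else 0)
      = ein n (half true S) := by
    rw [ein_eq_sum]
    apply Finset.sum_congr rfl; intro x _
    apply Finset.sum_congr rfl; intro y _
    simp
  have hff : (∑ x : Fin n → Bool, ∑ y : Fin n → Bool,
      if x ∈ half false S ∧ y ∈ half false S ∧
        ((True ∧ cubeEdge x y) ∨ (¬True ∧ x = y)) then 1 else 0)
      = ein n (half false S) := by
    rw [ein_eq_sum]
    apply Finset.sum_congr rfl; intro x _
    apply Finset.sum_congr rfl; intro y _
    simp
  have cross : ∀ (b c : Bool), ¬ b = c → ∀ (A B : Finset (Fin n → Bool)),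
      (∑ x : Fin n → Bool, ∑ y : Fin n → Bool,
        if x ∈ A ∧ y ∈ B ∧ ((b = c ∧ cubeEdge x y) ∨ (¬ b = c ∧ x = y)) then 1 else 0)
      = (A ∩ B).card := by
    intro b c hbc A B
    rw [← inter_card_as_sum A B]
    apply Finset.sum_congr rfl; intro x _
    have hy : ∀ y : Fin n → Bool,
        (if x ∈ A ∧ y ∈ B ∧ ((b = c ∧ cubeEdge x y) ∨ (¬ b = c ∧ x = y)) then 1 else 0)
        = if x = y then (if x ∈ A ∧ x ∈ B then 1 else 0) else 0 := by
      intro y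
      by_cases hxy : x = y
      · subst hxy
        by_cases h1 : x ∈ A <;> by_cases h2 : x ∈ B <;> simp [h1, h2, hbc]
      · simp [hxy, hbc]
    rw [Finset.sum_congr rfl (fun y _ => hy y), Finset.sum_ite_eq univ x]
    simp
  rw [htt, hff, cross true false (by simp) (half true S) (half false S),
    cross false true (by simp) (half false S) (half true S)]
  rw [Finset.inter_comm (half true S) (half false S)]
  ring

theorem harper : ∀ (n : ℕ) (S : Finset (Fin n → Bool)), ein n S ≤ 2 * ww S.card := by
  intro n
  induction n with
  | zero => intro S; rw [ein_zero]; exact Nat.zero_le _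
  | succ n ih =>
    intro S
    rw [ein_decomp, card_half S]
    have h1 := ih (half false S)
    have h2 := ih (half true S)
    have h3 : ((half false S) ∩ (half true S)).card ≤
        min (half false S).card (half true S).card :=
      le_min (Finset.card_le_card Finset.inter_subset_left)
        (Finset.card_le_card Finset.inter_subset_right)
    have h4 := hart (half false S).card (half true S).card
    omega

def bval {n : ℕ} (x : Fin n → Bool) : ℕ := ∑ i, if x i then 2^(i:ℕ) else 0

def iseg (n k : ℕ) : Finset (Fin n → Bool) := univ.filter (fun x => bval x < k)

lemma bval_cons {n : ℕ} (b : Bool) (x : Fin n → Bool) :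
    bval (Fin.cons b x) = (if b then 1 else 0) + 2 * bval x := by
  unfold bval
  rw [Fin.sum_univ_succ]
  simp only [Fin.cons_zero, Fin.cons_succ, pow_zero]
  congr 1
  rw [Finset.mul_sum]
  apply Finset.sum_congr rfl
  intro i _
  by_cases h : x i <;> simp [h, Fin.val_succ, pow_succ, mul_comm]

lemma half_iseg (n k : ℕ) (b : Bool) :
    half b (iseg (n+1) k) = iseg n (if b then k/2 else (k+1)/2) := by
  ext x
  rw [mem_half]
  simp only [iseg, mem_filter, mem_univ, true_and, bval_cons]
  cases b <;> simp <;> omega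

lemma iseg_card : ∀ n k, k ≤ 2^n → (iseg n k).card = k := by
  intro n
  induction n with
  | zero =>
    intro k hk
    interval_cases k
    · simp [iseg]
    · rw [show iseg 0 1 = univ from by ext x; simp [iseg, bval]]
      rw [Finset.card_univ]
      simp
  | succ n ih =>
    intro k hk
    rw [card_half, half_iseg, half_iseg, if_pos rfl, if_neg (by simp)]
    rw [pow_succ] at hk
    rw [ih ((k+1)/2) (by omega), ih (k/2) (by omega)]
    omega

lemma iseg_mono (n : ℕ) {k l : ℕ} (h : k ≤ l) : iseg n k ⊆ iseg n l := by
  intro x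
  simp only [iseg, mem_filter, mem_univ, true_and]
  omega

lemma iseg_ein : ∀ n k, k ≤ 2^n → ein n (iseg n k) = 2 * ww k := by
  intro n
  induction n with
  | zero =>
    intro k hk
    rw [ein_zero]
    interval_cases k <;> norm_num [ww, popc]
  | succ n ih =>
    intro k hk
    rw [ein_decomp, half_iseg, half_iseg, if_pos rfl, if_neg (by simp)]
    rw [pow_succ] at hk
    rw [ih ((k+1)/2) (by omega), ih (k/2) (by omega)]
    have hint : iseg n ((k+1)/2) ∩ iseg n (k/2) = iseg n (k/2) :=
      Finset.inter_eq_right.mpr (iseg_mono n (by omega))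
    rw [hint, iseg_card n (k/2) (by omega)]
    have := ww_halves k
    omega

lemma theta_eq (n k V : ℕ) (hk : k ≤ 2^n) (hV : n * k = V + 2 * ww k) :
    thetaMin n k = V := by
  have hc := iseg_card n k hk
  have he := iseg_ein n k hk
  have hs := eb_add_ein n (iseg n k)
  rw [hc, he] at hs
  have hub : edgeBoundary n (iseg n k) = V := by omega
  unfold thetaMin
  have hmem : V ∈ {m | ∃ S : Finset (Fin n → Bool), S.card = k ∧ edgeBoundary n S = m} :=
    ⟨iseg n k, hc, hub⟩
  apply le_antisymm (Nat.sInf_le hmem)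
  obtain ⟨S₀, hc₀, he₀⟩ := Nat.sInf_mem (⟨V, hmem⟩ : Set.Nonempty _)
  rw [← he₀]
  have h1 := eb_add_ein n S₀
  have h2 := harper n S₀
  rw [hc₀] at h1 h2
  omega


/-- For `n ≥ 3` and `α_n = ⌈2^n/24⌉`, one has
`θ(n,α_n) − 2α_n = 2^{n−3}` and `θ(n, 2^{n−1} − α_n) = 5·2^{n−3}`. -/
theorem theta_at_alpha (n : ℕ) (hn : 3 ≤ n) (α : ℕ)
    (hα : (α : ℤ) = ⌈(2^n : ℚ) / 24⌉) :
    thetaMin n α - 2*α = 2^(n-3) ∧ thetaMin n (2^(n-1) - α) = 5 * 2^(n-3) := by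
  obtain ⟨m, rfl⟩ : ∃ m, n = m + 3 := ⟨n - 3, by omega⟩
  have h2m : (1:ℕ) ≤ 2^m := Nat.one_le_two_pow
  have h8 : (2:ℕ)^(m+3) = 8 * 2^m := by rw [pow_add]; ring
  have h4 : (2:ℕ)^(m+2) = 4 * 2^m := by rw [pow_add]; ring
  have hA3 := AA3 m
  have hr : ∃ r, (r = 1 ∨ r = 2) ∧ 3 * AA m = 2^m + r := by
    rcases Nat.even_or_odd m with he | ho
    · exact ⟨2, Or.inr rfl, by rwa [if_pos he] at hA3⟩
    · exact ⟨1, Or.inl rfl, by rwa [if_neg (Nat.not_even_iff_odd.mpr ho)] at hA3⟩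
  obtain ⟨r, hr12, h3A⟩ := hr
  have hceil : ⌈(2^(m+3) : ℚ)/24⌉ = (AA m : ℤ) := by
    rw [Int.ceil_eq_iff]
    have hb1 : (2:ℕ)^(m+3) ≤ 24 * AA m := by omega
    have hb2 : 24 * AA m < 2^(m+3) + 24 := by omega
    have hq1 : ((2:ℚ))^(m+3) ≤ 24 * (AA m : ℚ) := by exact_mod_cast hb1
    have hq2 : 24 * (AA m : ℚ) < (2:ℚ)^(m+3) + 24 := by exact_mod_cast hb2
    constructor
    · rw [lt_div_iff₀ (by norm_num : (0:ℚ) < 24)]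
      push_cast
      linarith
    · rw [div_le_iff₀ (by norm_num : (0:ℚ) < 24)]
      push_cast
      linarith
  have hαA : α = AA m := by exact_mod_cast hα.trans hceil
  subst hαA
  obtain ⟨hid, -⟩ := main_id m
  have hαle : AA m ≤ 2^m := by omega
  have hV1 : (m+3) * AA m = (2 * AA m + 2^m) + 2 * ww (AA m) := by
    have hmul : (m+3) * AA m = (m+1) * AA m + 2 * AA m := by ring
    omega
  have ht1 : thetaMin (m+3) (AA m) = 2 * AA m + 2^m :=
    theta_eq (m+3) (AA m) _ (by omega) hV1
  obtain ⟨K, hK⟩ : ∃ K, K + AA m = 2^(m+2) := ⟨2^(m+2) - AA m, by omega⟩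
  have hcompl := compl_ww (m+2) (AA m) (by omega)
  rw [show (2:ℕ)^(m+2) - AA m = K by omega] at hcompl
  have hkey : (m+3) * K = 5 * 2^m + 2 * ww K := by
    have hid' := hid
    zify at hcompl hid' hK h4 ⊢
    linear_combination -hcompl - hid' + ((m:ℤ)+3) * hK + h4
  have ht2 : thetaMin (m+3) K = 5 * 2^m :=
    theta_eq (m+3) K _ (by omega) hkey
  have e1 : m + 3 - 3 = m := by omega
  have e2 : m + 3 - 1 = m + 2 := by omega
  rw [e1, e2, show (2:ℕ)^(m+2) - AA m = K by omega, ht1, ht2]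
  omega
end

section
/- For integers n, N define y_N = ⌈2^N/24⌉ / 2^N and p_N = 1/2 − y_N. Then: (a) for all n ≥ N ≥ 4, m_n(p_N) = 5/8; (b) for every even integer N ≥ 6, every n ≥ N, and every real x with p_{N−2} ≤ x ≤ p_N, one has m_N(x) = 5/8 and m_n(x) ≥ 5/8. -/
open Finset

lemma floor_eq' (x : ℝ) (n : ℤ) (h1 : (n:ℝ) ≤ x) (h2 : x < n+1) : Int.fract x = x - n := by
  rw [Int.fract, Int.floor_eq_iff.mpr ⟨h1, h2⟩]

lemma takDelta_succ (n : ℕ) (x : ℝ) :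
    takDelta (n+1) x = takDelta n (Int.fract (2*x)) / 2 := by
  rw [takDelta, Int.self_sub_floor]

lemma mTakagi_succ (n : ℕ) (x : ℝ) :
    mTakagi (n+1) x = takDelta 0 x + mTakagi n (Int.fract (2*x)) / 2 := by
  unfold mTakagi
  rw [Finset.sum_range_succ']
  simp only [takDelta_succ]
  rw [← Finset.sum_div]
  ring

lemma mTakagi_zero (x : ℝ) : mTakagi 0 x = 0 := by simp [mTakagi]

lemma d_left (x : ℝ) (h : x ≤ 1/2) : takDelta 0 x = x := by
  rw [takDelta, abs_of_nonpos (by linarith)]; ring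

lemma d_right (x : ℝ) (h : 1/2 ≤ x) : takDelta 0 x = 1 - x := by
  rw [takDelta, abs_of_nonneg (by linarith)]; ring

noncomputable def iterFrac : ℕ → ℝ → ℝ
  | 0, x => x
  | n+1, x => Int.fract (2 * iterFrac n x)

lemma iterFrac_fract (n : ℕ) (x : ℝ) :
    iterFrac n (Int.fract (2*x)) = iterFrac (n+1) x := by
  induction n with
  | zero => rfl
  | succ n ih => rw [iterFrac, ih]; rfl

lemma takDelta_eq (n : ℕ) (x : ℝ) :
    takDelta n x = (1/2 - |iterFrac n x - 1/2|) / 2^n := by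
  induction n generalizing x with
  | zero => simp [takDelta, iterFrac]
  | succ n ih =>
      rw [takDelta_succ, ih, iterFrac_fract]
      rw [pow_succ]
      ring

lemma iterFrac_mem (n : ℕ) (x : ℝ) (h : 1 ≤ n) :
    0 ≤ iterFrac n x ∧ iterFrac n x < 1 := by
  obtain ⟨m, rfl⟩ := Nat.exists_eq_add_of_le h
  rw [show 1 + m = m + 1 by omega, iterFrac]
  exact ⟨Int.fract_nonneg _, Int.fract_lt_one _⟩

lemma takDelta_nonneg (n : ℕ) (x : ℝ) (h : 1 ≤ n) : 0 ≤ takDelta n x := by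
  obtain ⟨h0, h1⟩ := iterFrac_mem n x h
  rw [takDelta_eq]
  apply div_nonneg _ (by positivity)
  rw [sub_nonneg, abs_le]
  constructor <;> linarith

lemma iterFrac_add (m n : ℕ) (x : ℝ) :
    iterFrac (m + n) x = iterFrac m (iterFrac n x) := by
  induction m with
  | zero => rw [Nat.zero_add]; rfl
  | succ m ih => rw [show m + 1 + n = (m + n) + 1 by omega, iterFrac, ih]; rfl

lemma iterFrac_of_zero (n : ℕ) : iterFrac n 0 = 0 := by
  induction n with
  | zero => rfl
  | succ n ih => rw [iterFrac, ih]; norm_num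

lemma iterFrac_zero_le (m n : ℕ) (x : ℝ) (h : iterFrac m x = 0) (hmn : m ≤ n) :
    iterFrac n x = 0 := by
  obtain ⟨j, rfl⟩ := Nat.exists_eq_add_of_le hmn
  rw [show m + j = j + m by omega, iterFrac_add, h, iterFrac_of_zero]

lemma mTakagi_ge (N n : ℕ) (x : ℝ) (hN : 1 ≤ N) (h : N ≤ n) :
    mTakagi N x ≤ mTakagi n x := by
  induction n, h using Nat.le_induction with
  | base => exact le_refl _
  | succ n hn ih =>
      have : mTakagi (n+1) x = mTakagi n x + takDelta n x := Finset.sum_range_succ _ _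
      have h2 := takDelta_nonneg n x (by omega)
      linarith

lemma mTakagi_eq_of_zero (N n : ℕ) (x : ℝ) (h0 : iterFrac N x = 0) (h : N ≤ n) :
    mTakagi n x = mTakagi N x := by
  induction n, h using Nat.le_induction with
  | base => rfl
  | succ n hn ih =>
      have : mTakagi (n+1) x = mTakagi n x + takDelta n x := Finset.sum_range_succ _ _
      have hz : iterFrac n x = 0 := iterFrac_zero_le N n x h0 hn
      rw [this, ih, takDelta_eq, hz]
      rw [show |(0:ℝ) - 1/2| = 1/2 by rw [abs_of_nonpos] <;> norm_num]
      norm_num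

noncomputable def uG (k : ℕ) : ℝ := 1/3 - 1/(3*4^k)

lemma four_pow_pos (k : ℕ) : (0:ℝ) < 4^k := by positivity

/-- the two-step fract iteration at `uG (k+1) - s`. -/
lemma uG_two_step (k : ℕ) (s : ℝ) (h0 : 0 ≤ s) (h1 : s ≤ 1/4^(k+1))
    (hk : 1 ≤ k ∨ s = 0) :
    Int.fract (2 * (uG (k+1) - s)) = 2/3 - 2/(3*4^(k+1)) - 2*s ∧
    Int.fract (2 * (2/3 - 2/(3*4^(k+1)) - 2*s)) = uG k - 4*s := by
  have hp : (0:ℝ) < 4^(k+1) := four_pow_pos _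
  have hq : (4:ℝ) ≤ 4^(k+1) := by
    calc (4:ℝ) = 4^1 := by norm_num
    _ ≤ 4^(k+1) := pow_le_pow_right₀ (by norm_num) (by omega)
  have ht : 1/(4:ℝ)^(k+1) ≤ 1/4 := by
    rw [div_le_div_iff₀ hp (by norm_num)]; linarith
  have ht0 : 0 < 1/(4:ℝ)^(k+1) := by positivity
  have htt : (1:ℝ)/(3*4^(k+1)) = (1/3)*(1/4^(k+1)) := by ring
  have htt2 : (2:ℝ)/(3*4^(k+1)) = (2/3)*(1/4^(k+1)) := by ring
  have e1 : (1:ℝ)/(3*4^k) = 4/(3*4^(k+1)) := by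
    rw [pow_succ]; field_simp
  have hbound : (4:ℝ)/(3*4^(k+1)) + 4*s ≤ 1/3 := by
    have h4 : (4:ℝ)/(3*4^(k+1)) = (4/3)*(1/4^(k+1)) := by ring
    rcases hk with hk | rfl
    · have hq16 : (16:ℝ) ≤ 4^(k+1) := by
        calc (16:ℝ) = 4^2 := by norm_num
        _ ≤ 4^(k+1) := pow_le_pow_right₀ (by norm_num) (by omega)
      have ht16 : 1/(4:ℝ)^(k+1) ≤ 1/16 := by
        rw [div_le_div_iff₀ hp (by norm_num)]; linarith
      linarith
    · linarith
  have h4e : (4:ℝ)/(3*4^(k+1)) = 2*(2/(3*4^(k+1))) := by ring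
  constructor
  · rw [floor_eq' _ 0 (by rw [uG]; push_cast; linarith) (by rw [uG]; push_cast; linarith)]
    rw [uG]; push_cast; ring
  · rw [floor_eq' _ 1 (by push_cast; linarith) (by push_cast; linarith)]
    rw [uG, e1]; push_cast; ring

/-- B: for k ≥ 1, `m_{2k}` on `[uG k − 2^{−2k}, uG k]` has slope −2. -/
lemma lemB : ∀ k : ℕ, 1 ≤ k → ∀ s : ℝ, 0 ≤ s → s ≤ 1/4^k →
    mTakagi (2*k) (uG k - s) = 2/3 - 2/(3*4^k) - 2*s := by
  intro k hk
  induction k, hk using Nat.le_induction with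
  | base =>
      intro s h0 h1
      norm_num [uG] at h1 ⊢
      have f1 : Int.fract (2 * (1/4 - s)) = 1/2 - 2*s := by
        rw [floor_eq' _ 0 (by push_cast; linarith) (by push_cast; linarith)]
        push_cast; ring
      rw [show (2:ℕ) = 1 + 1 from rfl, mTakagi_succ, f1, mTakagi_succ, mTakagi_zero]
      rw [d_left _ (by linarith), d_left _ (by linarith)]
      ring
  | succ k hk ih =>
      intro s h0 h1
      have hp : (0:ℝ) < 4^(k+1) := four_pow_pos _
      have hq : (16:ℝ) ≤ 4^(k+1) := by
        calc (16:ℝ) = 4^2 := by norm_num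
        _ ≤ 4^(k+1) := pow_le_pow_right₀ (by norm_num) (by omega)
      have ht : 1/(4:ℝ)^(k+1) ≤ 1/16 := by
        rw [div_le_div_iff₀ hp (by norm_num)]; linarith
      have ht0 : 0 < 1/(4:ℝ)^(k+1) := by positivity
      have htt : (1:ℝ)/(3*4^(k+1)) = (1/3)*(1/4^(k+1)) := by ring
      have htt2 : (2:ℝ)/(3*4^(k+1)) = (2/3)*(1/4^(k+1)) := by ring
      obtain ⟨f1, f2⟩ := uG_two_step k s h0 h1 (Or.inl hk)
      have e2 : (2:ℝ)/(3*4^k) = 8/(3*4^(k+1)) := by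
        rw [pow_succ]; field_simp; ring
      rw [show 2*(k+1) = (2*k+1)+1 by ring, mTakagi_succ, f1,
        mTakagi_succ, f2, ih (4*s) (by linarith)
          (by rw [show (1:ℝ)/4^k = 4 * (1/4^(k+1)) by rw [pow_succ]; field_simp]; linarith)]
      rw [d_left _ (by rw [uG]; linarith), d_right _ (by linarith), uG, e2]
      ring

lemma lemA : ∀ k : ℕ, mTakagi (2*k) (uG k) = 2/3 - 2/(3*4^k) := by
  intro k
  rcases Nat.eq_zero_or_pos k with rfl | hk
  · rw [show 2*0 = 0 from rfl, mTakagi_zero]; norm_num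
  · have := lemB k hk 0 (le_refl 0) (by positivity)
    rw [sub_zero] at this
    rw [this]; ring

lemma lemU : ∀ k : ℕ, iterFrac (2*k) (uG k) = 0 := by
  intro k
  induction k with
  | zero => rw [show 2*0 = 0 from rfl, iterFrac, uG]; norm_num
  | succ k ih =>
      obtain ⟨f1, f2⟩ := uG_two_step k 0 (le_refl 0) (by positivity) (Or.inr rfl)
      rw [sub_zero] at f1
      have h2 : iterFrac 2 (uG (k+1)) = uG k := by
        show Int.fract (2 * Int.fract (2 * uG (k+1))) = uG k
        rw [f1, f2]; ring
      rw [show 2*(k+1) = 2*k + 2 by ring, iterFrac_add, h2, ih]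

lemma lemC (k : ℕ) (s : ℝ) (h0 : 0 ≤ s) (h1 : s ≤ 1/4^(k+2)) (hk : 1 ≤ k ∨ s = 0) :
    mTakagi (2*k+4) (11/24 - 1/(3*4^(k+2)) - s) = 5/8 ∧
    iterFrac 4 (11/24 - 1/(3*4^(k+2)) - s) = uG k - 16*s := by
  have hp : (0:ℝ) < 4^(k+2) := four_pow_pos _
  have hq16 : (16:ℝ) ≤ 4^(k+2) := by
    calc (16:ℝ) = 4^2 := by norm_num
    _ ≤ 4^(k+2) := pow_le_pow_right₀ (by norm_num) (by omega)
  have hq3 : (1:ℝ)/4^(k+2) = 3 * (1/(3*4^(k+2))) := by ring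
  have hql : (1:ℝ)/(3*4^(k+2)) ≤ 1/48 := by
    rw [div_le_div_iff₀ (by positivity) (by norm_num)]; linarith
  have hq0 : (0:ℝ) < 1/(3*4^(k+2)) := by positivity
  have h1' : s ≤ 3 * (1/(3*4^(k+2))) := by rw [← hq3]; exact h1
  have hu : (1:ℝ)/(3*4^k) = 16 * (1/(3*4^(k+2))) := by
    rw [show k+2 = k+1+1 from rfl, pow_succ, pow_succ]; field_simp; ring
  have hb2 : 8*(1/(3*4^(k+2))) + 8*s ≤ 1/6 := by
    rcases hk with hk | rfl
    · have h64 : (64:ℝ) ≤ 4^(k+2) := by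
        calc (64:ℝ) = 4^3 := by norm_num
        _ ≤ 4^(k+2) := pow_le_pow_right₀ (by norm_num) (by omega)
      have : (1:ℝ)/(3*4^(k+2)) ≤ 1/192 := by
        rw [div_le_div_iff₀ (by positivity) (by norm_num)]; linarith
      linarith
    · linarith
  set q : ℝ := 1/(3*4^(k+2)) with hqdef
  have f1 : Int.fract (2*(11/24 - q - s)) = 11/12 - 2*q - 2*s := by
    rw [floor_eq' _ 0 (by push_cast; linarith) (by push_cast; linarith)]
    push_cast; ring
  have f2 : Int.fract (2*(11/12 - 2*q - 2*s)) = 5/6 - 4*q - 4*s := by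
    rw [floor_eq' _ 1 (by push_cast; linarith) (by push_cast; linarith)]
    push_cast; ring
  have f3 : Int.fract (2*(5/6 - 4*q - 4*s)) = 2/3 - 8*q - 8*s := by
    rw [floor_eq' _ 1 (by push_cast; linarith) (by push_cast; linarith)]
    push_cast; ring
  have f4 : Int.fract (2*(2/3 - 8*q - 8*s)) = uG k - 16*s := by
    rw [floor_eq' _ 1 (by push_cast; linarith) (by push_cast; linarith)]
    rw [uG, hu]; push_cast; ring
  constructor
  · have hm : mTakagi (2*k) (uG k - 16*s) = 2/3 - 2/(3*4^k) - 32*s := by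
      rcases hk with hk | rfl
      · have hs16 : 16*s ≤ 1/4^k := by
          have : (1:ℝ)/4^k = 3*(1/(3*4^k)) := by ring
          rw [this, hu]; linarith
        rw [lemB k hk (16*s) (by linarith) hs16]; ring
      · rw [mul_zero, sub_zero, lemA k, mul_zero, sub_zero]
    rw [show 2*k+4 = (2*k+3)+1 by ring, mTakagi_succ, f1,
        show 2*k+3 = (2*k+2)+1 by ring, mTakagi_succ, f2,
        show 2*k+2 = (2*k+1)+1 by ring, mTakagi_succ, f3,
        mTakagi_succ, f4, hm]
    rw [d_left _ (by linarith), d_right _ (by linarith), d_right _ (by linarith),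
        d_right _ (by linarith)]
    rw [show (2:ℝ)/(3*4^k) = 2*(1/(3*4^k)) by ring, hu]
    ring
  · show Int.fract (2 * Int.fract (2 * Int.fract (2 * Int.fract (2 * (11/24 - q - s))))) = uG k - 16*s
    rw [f1, f2, f3, f4]


lemma ceil_c (k : ℕ) : ∃ c : ℤ, 3*c = 2*4^k + 1 := by
  induction k with
  | zero => exact ⟨1, by norm_num⟩
  | succ k ih =>
      obtain ⟨c, hc⟩ := ih
      exact ⟨4*c - 1, by rw [pow_succ]; linarith⟩

lemma pEven (k : ℕ) : pGuu (2*k+4) = 11/24 - 1/(3*4^(k+2)) := by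
  obtain ⟨c, hc⟩ := ceil_c k
  have hcR : (3:ℝ)*c = 2*4^k + 1 := by exact_mod_cast congrArg (fun z : ℤ => (z:ℝ)) hc
  have hpow : (2:ℝ)^(2*k+4) = 16*4^k := by
    rw [pow_add, pow_mul]; norm_num [mul_comm]
  have hp : (0:ℝ) < 4^k := four_pow_pos k
  have hceil : ⌈(2:ℝ)^(2*k+4)/24⌉ = c := by
    rw [Int.ceil_eq_iff, hpow]
    constructor <;> push_cast <;> linarith
  have hc3 : (c:ℝ) = (2*4^k+1)/3 := by linarith
  rw [pGuu, yGuu, hceil, hpow, show (4:ℝ)^(k+2) = 16*4^k by rw [pow_add]; norm_num [mul_comm], hc3]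
  field_simp
  ring

lemma pOdd (k : ℕ) : pGuu (2*k+5) = pGuu (2*k+4) := by
  obtain ⟨c, hc⟩ := ceil_c k
  have hcR : (3:ℝ)*c = 2*4^k + 1 := by exact_mod_cast congrArg (fun z : ℤ => (z:ℝ)) hc
  have hpow4 : (2:ℝ)^(2*k+4) = 16*4^k := by rw [pow_add, pow_mul]; norm_num [mul_comm]
  have hpow5 : (2:ℝ)^(2*k+5) = 32*4^k := by rw [pow_add, pow_mul]; norm_num [mul_comm]
  have hp : (0:ℝ) < 4^k := four_pow_pos k
  have hceil4 : ⌈(2:ℝ)^(2*k+4)/24⌉ = c := by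
    rw [Int.ceil_eq_iff, hpow4]
    constructor <;> push_cast <;> linarith
  have hceil5 : ⌈(2:ℝ)^(2*k+5)/24⌉ = 2*c := by
    rw [Int.ceil_eq_iff, hpow5]
    constructor <;> push_cast <;> linarith
  rw [pGuu, pGuu, yGuu, yGuu, hceil4, hceil5, hpow4, hpow5]
  push_cast
  field_simp
  ring

lemma keyEven (k : ℕ) :
    mTakagi (2*k+4) (pGuu (2*k+4)) = 5/8 ∧ iterFrac (2*k+4) (pGuu (2*k+4)) = 0 := by
  obtain ⟨hC, hI4⟩ := lemC k 0 le_rfl (by positivity) (Or.inr rfl)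
  rw [sub_zero] at hC hI4
  rw [mul_zero, sub_zero] at hI4
  rw [pEven k]
  exact ⟨hC, by rw [iterFrac_add, hI4, lemU k]⟩

/-- With `y_N = ⌈2^N/24⌉/2^N` and `p_N = 1/2 − y_N`:
(a) `m_n(p_N) = 5/8` for all `n ≥ N ≥ 4`; (b) for even `N ≥ 6`, all `n ≥ N` and all
`x ∈ [p_{N−2}, p_N]`, `m_N(x) = 5/8` and `m_n(x) ≥ 5/8`. -/
theorem takagi_partial_sum_at_p :
    (∀ N n : ℕ, 4 ≤ N → N ≤ n → mTakagi n (pGuu N) = 5/8) ∧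
    (∀ N : ℕ, 6 ≤ N → Even N → ∀ n : ℕ, N ≤ n → ∀ x : ℝ,
      pGuu (N-2) ≤ x → x ≤ pGuu N →
      mTakagi N x = 5/8 ∧ mTakagi n x ≥ 5/8) := by
  constructor
  · intro N n h4 hn
    suffices h : mTakagi N (pGuu N) = 5/8 ∧ iterFrac N (pGuu N) = 0 by
      rw [mTakagi_eq_of_zero N n _ h.2 hn, h.1]
    rcases Nat.even_or_odd N with ⟨m, hm⟩ | ⟨m, hm⟩
    · have hN : N = 2*(m-2)+4 := by omega
      rw [hN]
      exact keyEven (m-2)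
    · have hN : N = 2*(m-2)+5 := by omega
      set k := m - 2
      obtain ⟨hC, hI⟩ := keyEven k
      rw [hN, pOdd k]
      constructor
      · rw [mTakagi_eq_of_zero (2*k+4) (2*k+5) _ hI (by omega), hC]
      · exact iterFrac_zero_le (2*k+4) (2*k+5) _ hI (by omega)
  · intro N h6 hEv n hn x hx1 hx2
    obtain ⟨m, hm⟩ := hEv
    have hN : N = 2*(m-2)+4 := by omega
    set k := m - 2 with hkdef
    have hk : 1 ≤ k := by omega
    have hN2 : N - 2 = 2*(k-1)+4 := by omega
    rw [hN2, pEven (k-1), show k-1+2 = k+1 by omega] at hx1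
    rw [hN, pEven k] at hx2
    have e1 : (1:ℝ)/(3*4^(k+1)) = 4/(3*4^(k+2)) := by
      rw [show k+2 = (k+1)+1 from rfl, pow_succ]; field_simp; ring
    have e2 : (1:ℝ)/4^(k+2) = 3*(1/(3*4^(k+2))) := by ring
    set s : ℝ := 11/24 - 1/(3*4^(k+2)) - x with hs
    have h0 : 0 ≤ s := by rw [hs]; linarith
    have h1 : s ≤ 1/4^(k+2) := by
      rw [hs, e2]
      rw [e1, show (4:ℝ)/(3*4^(k+2)) = 4*(1/(3*4^(k+2))) by ring] at hx1
      linarith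
    have hxeq : x = 11/24 - 1/(3*4^(k+2)) - s := by rw [hs]; ring
    have hC := (lemC k s h0 h1 (Or.inl hk)).1
    rw [hN] at hn ⊢
    rw [hxeq]
    refine ⟨hC, ?_⟩
    have hge := mTakagi_ge (2*k+4) n (11/24 - 1/(3*4^(k+2)) - s) (by omega) hn
    linarith [hge, hC.le, hC.ge]
end

section
/- Let n ≥ 2, S ⊆ V(Q_n), 1 ≤ i ≤ n, and set S_0 = g_{n,i,0}^{−1}(S), S_1 = g_{n,i,1}^{−1}(S). Then Type(S) ≤ 2·Type(S_0) + |S_1 \ S_0| and Type(S) ≤ 2·Type(S_1) + |S_0 \ S_1|, where Type(S_0) and Type(S_1) are computed in Q_{n−1}. -/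
open Finset

lemma insertNth_inj {n : ℕ} (i : Fin (n+1)) (b : Bool) :
    Function.Injective (fun x : Fin n → Bool => Fin.insertNth (α := fun _ => Bool) i b x) := by
  intro x y h
  have := congrArg (Fin.removeNth i) h
  simpa using this

lemma image_eq {n : ℕ} (S : Finset (Fin (n+1) → Bool)) (i : Fin (n+1)) (j : Fin n)
    (a b : Bool) :
    Finset.image (fun x => i.insertNth b x) (gPre n i b S ∩ halfPlane n j a)
      = (S ∩ halfPlane (n+1) (i.succAbove j) a).filter (fun x => x i = b) := by
  ext x
  simp only [Finset.mem_image, Finset.mem_filter, Finset.mem_inter, gPre, halfPlane,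
    Finset.mem_filter, Finset.mem_univ, true_and]
  constructor
  · rintro ⟨y, ⟨hyS, hyj⟩, rfl⟩
    refine ⟨⟨hyS, ?_⟩, ?_⟩
    · simpa [Fin.insertNth_apply_succAbove] using hyj
    · simp
  · rintro ⟨⟨hxS, hxj⟩, hxi⟩
    refine ⟨i.removeNth x, ⟨?_, ?_⟩, ?_⟩
    · rw [← hxi, Fin.insertNth_self_removeNth]; exact hxS
    · simpa [Fin.removeNth] using hxj
    · rw [← hxi, Fin.insertNth_self_removeNth]

lemma card_split {n : ℕ} (S : Finset (Fin (n+1) → Bool)) (i : Fin (n+1)) (j : Fin n)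
    (a : Bool) :
    (S ∩ halfPlane (n+1) (i.succAbove j) a).card
      = (gPre n i false S ∩ halfPlane n j a).card
        + (gPre n i true S ∩ halfPlane n j a).card := by
  rw [← Finset.card_filter_add_card_filter_not
    (s := S ∩ halfPlane (n+1) (i.succAbove j) a) (p := fun x => x i = false),
    ← image_eq S i j a false, Finset.card_image_of_injective _ (insertNth_inj i false)]
  congr 1
  have hfilter : (S ∩ halfPlane (n+1) (i.succAbove j) a).filter (fun x => ¬ x i = false)
      = (S ∩ halfPlane (n+1) (i.succAbove j) a).filter (fun x => x i = true) := by
    ext x; simp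
  rw [hfilter, ← image_eq S i j a true, Finset.card_image_of_injective _ (insertNth_inj i true)]

lemma key {n : ℕ} (hn : 1 ≤ n) (S : Finset (Fin (n+1) → Bool)) (i : Fin (n+1)) (b : Bool) :
    typeOf (n+1) S ≤ 2 * typeOf n (gPre n i b S) + (gPre n i (!b) S \ gPre n i b S).card := by
  set T := {m | ∃ (j : Fin n) (a : Bool), (gPre n i b S ∩ halfPlane n j a).card = m}
  have hne : T.Nonempty := ⟨_, ⟨⟨0, hn⟩, false, rfl⟩⟩
  obtain ⟨j, a, hja⟩ := Nat.sInf_mem hne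
  have h1 : typeOf (n+1) S ≤ (S ∩ halfPlane (n+1) (i.succAbove j) a).card :=
    Nat.sInf_le ⟨i.succAbove j, a, rfl⟩
  have h2 : (gPre n i (!b) S ∩ halfPlane n j a).card
      ≤ (gPre n i b S ∩ halfPlane n j a).card + (gPre n i (!b) S \ gPre n i b S).card := by
    refine le_trans (Finset.card_le_card ?_) (Finset.card_union_le _ _)
    intro x hx
    simp only [Finset.mem_inter, Finset.mem_union, Finset.mem_sdiff] at *
    by_cases h : x ∈ gPre n i b S
    · exact Or.inl ⟨h, hx.2⟩
    · exact Or.inr ⟨hx.1, h⟩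
  have hsplit := card_split S i j a
  have : typeOf n (gPre n i b S) = (gPre n i b S ∩ halfPlane n j a).card := hja.symm
  rw [this]
  cases b with
  | false =>
    rw [show (!false) = true from rfl] at *
    omega
  | true =>
    rw [show (!true) = false from rfl] at *
    omega

/-- With `S₀ = g_{n,i,0}^{−1}(S)` and `S₁ = g_{n,i,1}^{−1}(S)`,
`Type(S) ≤ 2·Type(S₀) + |S₁ \ S₀|` and `Type(S) ≤ 2·Type(S₁) + |S₀ \ S₁|`.
(Here the ambient cube is `Q_{n+1}`; `n ≥ 1` so that `n+1 ≥ 2`.) -/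
theorem type_projection_bound (n : ℕ) (hn : 1 ≤ n)
    (S : Finset (Fin (n+1) → Bool)) (i : Fin (n+1)) :
    typeOf (n+1) S ≤ 2 * typeOf n (gPre n i false S) + (gPre n i true S \ gPre n i false S).card ∧
    typeOf (n+1) S ≤ 2 * typeOf n (gPre n i true S) + (gPre n i false S \ gPre n i true S).card :=
  ⟨key hn S i false, key hn S i true⟩
end
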